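/- arXiv:1803.03227 — 2 statements merged into one kernel-verified Lean document; each statement's English description precedes it below -/
import Mathlib

section
/- For every λ = (λ1,λ2) ∈ ℕ₀², the polynomial Q_λ(x,y) has the form Q_λ(x,y) = x^{λ1}·y^{λ2} + Σ_{ν∈ℕ₀²} γ_ν·x^{ν1}·y^{ν2} for some integers γ_ν, where γ_ν = 0 unless all of the following hold: ν1 + 2ν2 ≤ λ1 + 2λ2, 2ν1 + ν2 ≤ 2λ1 + λ2, ν1 + ν2 < λ1 + λ2, and ν1 − ν2 ≡ λ1 − λ2 (mod 3). Equivalently: the coefficient of Q_λ at the monomial x^{λ1}y^{λ2} equals 1, and every monomial x^{ν1}y^{ν2} with nonzero coefficient in Q_λ other than x^{λ1}y^{λ2} satisfies the four conditions above. -/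
open MvPolynomial

noncomputable section

abbrev Rxy : Type := MvPolynomial (Fin 2) ℤ

/-- Defining properties of the SU(3) character polynomials `Q a b`
(with the convention `Q a b = 0` whenever `(a, b) ∉ ℕ₀²`). -/
def IsQSU3 (Q : ℤ → ℤ → Rxy) : Prop :=
  (∀ a b : ℤ, (a < 0 ∨ b < 0) → Q a b = 0) ∧
  Q 0 0 = 1 ∧
  Q 1 0 = X 0 ∧
  (∀ a b : ℤ, 0 ≤ a → 0 ≤ b →
    X 0 * Q a b = Q (a + 1) b + Q a (b - 1) + Q (a - 1) (b + 1)) ∧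
  (∀ a b : ℤ, rename (Equiv.swap (0 : Fin 2) 1) (Q a b) = Q b a)

def mono (a b : ℕ) : Fin 2 →₀ ℕ := Finsupp.single 0 a + Finsupp.single 1 b

lemma mono_apply0 (a b : ℕ) : mono a b 0 = a := by
  simp [mono, Finsupp.single_apply]

lemma mono_apply1 (a b : ℕ) : mono a b 1 = b := by
  simp [mono, Finsupp.single_apply]

lemma mono_inj {a b c d : ℕ} (h : mono a b = mono c d) : a = c ∧ b = d := by
  constructor
  · have := DFunLike.congr_fun h 0; simpa [mono_apply0] using this
  · have := DFunLike.congr_fun h 1; simpa [mono_apply1] using this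

lemma coeff_X0_mul (p : Rxy) (a b : ℕ) :
    coeff (mono a b) (X 0 * p) =
      if a = 0 then 0 else coeff (mono (a-1) b) p := by
  rcases Nat.eq_zero_or_pos a with ha | ha
  · subst ha
    rw [coeff_X_mul']
    simp [Finsupp.mem_support_iff, mono_apply0]
  · have : mono a b = Finsupp.single 0 1 + mono (a-1) b := by
      ext i
      fin_cases i <;> simp [mono_apply0, mono_apply1, Finsupp.single_apply] <;> omega
    rw [this, coeff_X_mul]
    simp [Nat.pos_iff_ne_zero.mp ha]

lemma coeff_swap (p : Rxy) (a b : ℕ) :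
    coeff (mono a b) (rename (Equiv.swap (0 : Fin 2) 1) p) = coeff (mono b a) p := by
  have h := coeff_rename_mapDomain (Equiv.swap (0 : Fin 2) 1) (Equiv.injective _) p (mono b a)
  have hm : Finsupp.mapDomain (Equiv.swap (0 : Fin 2) 1) (mono b a) = mono a b := by
    simp [mono, Finsupp.mapDomain_add, Finsupp.mapDomain_single, Equiv.swap_apply_left,
      Equiv.swap_apply_right, add_comm]
  rw [hm] at h
  exact h

/-- The full claim, as a predicate on `(l1, l2)`. -/
def Pred (Q : ℤ → ℤ → Rxy) (l1 l2 : ℕ) : Prop :=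
  coeff (mono l1 l2) (Q l1 l2) = 1 ∧
  ∀ n1 n2 : ℕ, coeff (mono n1 n2) (Q l1 l2) ≠ 0 → (n1, n2) ≠ (l1, l2) →
    n1 + 2*n2 ≤ l1 + 2*l2 ∧ 2*n1 + n2 ≤ 2*l1 + l2 ∧ n1 + n2 < l1 + l2 ∧
    ((n1:ℤ) - n2) % 3 = ((l1:ℤ) - l2) % 3

lemma pred_main (Q : ℤ → ℤ → Rxy) (hQ : IsQSU3 Q) :
    ∀ N l1 l2 : ℕ, l1 + l2 = N → Pred Q l1 l2 := by
  obtain ⟨hzero, hone, -, hrec, hsym⟩ := hQ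
  intro N
  induction N using Nat.strong_induction_on with
  | _ N ih =>
  have key : ∀ l1 l2 : ℕ, l1 + l2 = N → l1 ≠ 0 → Pred Q l1 l2 := by
    intro l1 l2 hN hl1
    obtain ⟨k, rfl⟩ : ∃ k, l1 = k + 1 := ⟨l1 - 1, by omega⟩
    have hrk := hrec k l2 (by positivity) (by positivity)
    have hQeq : Q ((k+1 : ℕ) : ℤ) (l2 : ℤ)
        = X 0 * Q k l2 - Q (k : ℤ) ((l2:ℤ) - 1) - Q ((k:ℤ) - 1) ((l2:ℤ) + 1) := by
      push_cast
      linear_combination -hrk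
    have hco : ∀ n1 n2 : ℕ, coeff (mono n1 n2) (Q ((k+1:ℕ):ℤ) (l2:ℤ))
        = (if n1 = 0 then 0 else coeff (mono (n1-1) n2) (Q (k:ℤ) (l2:ℤ)))
          - coeff (mono n1 n2) (Q (k:ℤ) ((l2:ℤ)-1))
          - coeff (mono n1 n2) (Q ((k:ℤ)-1) ((l2:ℤ)+1)) := by
      intro n1 n2
      rw [hQeq, coeff_sub, coeff_sub, coeff_X0_mul]
    have IH1 : Pred Q k l2 := ih (k + l2) (by omega) k l2 rfl
    -- leading coefficient
    have hB0 : ∀ n1 n2 : ℕ, 2*n1 + n2 ≥ 2*k + l2 + n2 - n2 → True := fun _ _ _ => trivial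
    constructor
    · rw [hco]
      have h1 : coeff (mono ((k+1)-1) l2) (Q (k:ℤ) (l2:ℤ)) = 1 := by
        simpa using IH1.1
      have h2 : coeff (mono (k+1) l2) (Q (k:ℤ) ((l2:ℤ)-1)) = 0 := by
        rcases Nat.eq_zero_or_pos l2 with h | h
        · subst h; rw [show ((0:ℕ):ℤ) - 1 = -1 by norm_num, hzero k (-1) (Or.inr (by norm_num))]
          simp
        · obtain ⟨m, rfl⟩ : ∃ m, l2 = m + 1 := ⟨l2 - 1, by omega⟩
          have hc : ((m+1:ℕ):ℤ) - 1 = ((m:ℕ):ℤ) := by push_cast; ring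
          rw [hc]
          have IH2 : Pred Q k m := ih (k + m) (by omega) k m rfl
          by_contra hB
          have := IH2.2 (k+1) (m+1) hB (by simp)
          omega
      have h3 : coeff (mono (k+1) l2) (Q ((k:ℤ)-1) ((l2:ℤ)+1)) = 0 := by
        rcases Nat.eq_zero_or_pos k with h | h
        · subst h; rw [show ((0:ℕ):ℤ) - 1 = -1 by norm_num, hzero (-1) _ (Or.inl (by norm_num))]
          simp
        · obtain ⟨j, rfl⟩ : ∃ j, k = j + 1 := ⟨k - 1, by omega⟩
          have hc : ((j+1:ℕ):ℤ) - 1 = ((j:ℕ):ℤ) := by push_cast; ring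
          have hc2 : ((l2:ℕ):ℤ) + 1 = ((l2+1:ℕ):ℤ) := by push_cast; ring
          rw [hc, hc2]
          have IH3 : Pred Q j (l2+1) := ih (j + (l2+1)) (by omega) j (l2+1) rfl
          by_contra hC
          have := IH3.2 (j+1+1) l2 hC (by simp)
          omega
      rw [h1, h2, h3]
      simp
    · intro n1 n2 hne hnl
      rw [hco] at hne
      have hcases : (¬ n1 = 0 ∧ coeff (mono (n1-1) n2) (Q (k:ℤ) (l2:ℤ)) ≠ 0)
          ∨ coeff (mono n1 n2) (Q (k:ℤ) ((l2:ℤ)-1)) ≠ 0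
          ∨ coeff (mono n1 n2) (Q ((k:ℤ)-1) ((l2:ℤ)+1)) ≠ 0 := by
        by_contra h
        push_neg at h
        obtain ⟨h1, h2, h3⟩ := h
        rcases Nat.eq_zero_or_pos n1 with h0 | h0
        · subst h0
          rw [if_pos rfl, h2, h3] at hne
          simp at hne
        · rw [if_neg (by omega), h1 (by omega), h2, h3] at hne
          simp at hne
      rcases hcases with ⟨h0, hA⟩ | hB | hC
      · rcases eq_or_ne ((n1-1 : ℕ), n2) (k, l2) with h | h
        · exfalso; apply hnl
          rw [Prod.mk.injEq] at h ⊢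
          omega
        · rcases IH1.2 (n1-1) n2 hA h with ⟨c1, c2, c3, c4⟩
          refine ⟨by omega, by omega, by omega, by omega⟩
      · rcases Nat.eq_zero_or_pos l2 with h | h
        · exfalso
          rw [show ((l2:ℕ):ℤ) - 1 = -1 by rw [h]; norm_num,
            hzero k (-1) (Or.inr (by norm_num))] at hB
          simp at hB
        · obtain ⟨m, rfl⟩ : ∃ m, l2 = m + 1 := ⟨l2 - 1, by omega⟩
          rw [show ((m+1:ℕ):ℤ) - 1 = ((m:ℕ):ℤ) by push_cast; ring] at hB
          have IH2 : Pred Q k m := ih (k + m) (by omega) k m rfl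
          rcases eq_or_ne (n1, n2) (k, m) with h | h
          · rw [Prod.mk.injEq] at h
            obtain ⟨rfl, rfl⟩ := h
            refine ⟨by omega, by omega, by omega, by omega⟩
          · rcases IH2.2 n1 n2 hB h with ⟨c1, c2, c3, c4⟩
            refine ⟨by omega, by omega, by omega, by omega⟩
      · rcases Nat.eq_zero_or_pos k with h | h
        · exfalso
          rw [show ((k:ℕ):ℤ) - 1 = -1 by rw [h]; norm_num,
            hzero (-1) _ (Or.inl (by norm_num))] at hC
          simp at hC
        · obtain ⟨j, rfl⟩ : ∃ j, k = j + 1 := ⟨k - 1, by omega⟩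
          rw [show ((j+1:ℕ):ℤ) - 1 = ((j:ℕ):ℤ) by push_cast; ring,
            show ((l2:ℕ):ℤ) + 1 = ((l2+1:ℕ):ℤ) by push_cast; ring] at hC
          have IH3 : Pred Q j (l2+1) := ih (j + (l2+1)) (by omega) j (l2+1) rfl
          rcases eq_or_ne (n1, n2) (j, l2+1) with h | h
          · rw [Prod.mk.injEq] at h
            obtain ⟨rfl, rfl⟩ := h
            refine ⟨by omega, by omega, by omega, by omega⟩
          · rcases IH3.2 n1 n2 hC h with ⟨c1, c2, c3, c4⟩
            refine ⟨by omega, by omega, by omega, by omega⟩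
  intro l1 l2 hN
  rcases Nat.eq_zero_or_pos l1 with h1 | h1
  · subst h1
    rcases Nat.eq_zero_or_pos l2 with h2 | h2
    · subst h2
      constructor
      · rw [show ((0:ℕ):ℤ) = (0:ℤ) by norm_num, hone]
        have : mono 0 0 = 0 := by ext i; fin_cases i <;> simp [mono_apply0, mono_apply1]
        rw [this]
        simp
      · intro n1 n2 hne hnl
        rw [show ((0:ℕ):ℤ) = (0:ℤ) by norm_num, hone, coeff_one] at hne
        split_ifs at hne with h
        · have hm : mono n1 n2 = mono 0 0 := by
            rw [show mono 0 0 = 0 by simp [mono]]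
            exact h.symm
          obtain ⟨ha, hb⟩ := mono_inj hm
          exact absurd (by simp [ha, hb]) hnl
        · exact (hne rfl).elim
    · -- symmetry case
      have hP : Pred Q l2 0 := key l2 0 (by omega) (by omega)
      have hs := hsym (l2 : ℤ) 0
      have hcs : ∀ a b : ℕ, coeff (mono a b) (Q ((0:ℕ):ℤ) (l2:ℤ)) =
          coeff (mono b a) (Q (l2:ℤ) ((0:ℕ):ℤ)) := by
        intro a b
        rw [show ((0:ℕ):ℤ) = (0:ℤ) by norm_num, ← hs, coeff_swap]
      constructor
      · rw [hcs]
        exact hP.1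
      · intro n1 n2 hne hnl
        rw [hcs] at hne
        have hnl' : (n2, n1) ≠ (l2, 0) := by
          intro hc
          rw [Prod.mk.injEq] at hc
          exact hnl (by rw [Prod.mk.injEq]; omega)
        rcases hP.2 n2 n1 hne hnl' with ⟨c1, c2, c3, c4⟩
        refine ⟨by omega, by omega, by omega, by omega⟩
  · exact key l1 l2 hN (by omega)

theorem stmt_0 (Q : ℤ → ℤ → Rxy) (hQ : IsQSU3 Q) (l1 l2 : ℕ) :
    coeff (Finsupp.single 0 l1 + Finsupp.single 1 l2) (Q (l1 : ℤ) (l2 : ℤ)) = 1 ∧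
    ∀ n1 n2 : ℕ,
      coeff (Finsupp.single 0 n1 + Finsupp.single 1 n2) (Q (l1 : ℤ) (l2 : ℤ)) ≠ 0 →
      (n1, n2) ≠ (l1, l2) →
      n1 + 2 * n2 ≤ l1 + 2 * l2 ∧
      2 * n1 + n2 ≤ 2 * l1 + l2 ∧
      n1 + n2 < l1 + l2 ∧
      (n1 : ℤ) - (n2 : ℤ) ≡ (l1 : ℤ) - (l2 : ℤ) [ZMOD 3] := by
  obtain ⟨h1, h2⟩ := pred_main Q hQ (l1 + l2) l1 l2 rfl
  refine ⟨h1, fun n1 n2 hne hnl => ?_⟩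
  obtain ⟨c1, c2, c3, c4⟩ := h2 n1 n2 hne hnl
  exact ⟨c1, c2, c3, c4⟩
end
end

section
/- For all integers n, m ≥ 1 and all nonzero complex numbers z_1, z_2, one has Q_{(n−1,m−1)}(z_1 + z_2^{−1} + z_1^{−1}z_2, z_1^{−1} + z_2 + z_1z_2^{−1}) · (z_1z_2 − z_1^{−1}z_2^{−1} + z_1z_2^{−2} − z_1^{2}z_2^{−1} + z_1^{−2}z_2 − z_1^{−1}z_2^{2}) = z_1^{n}z_2^{m} − z_1^{−m}z_2^{−n} + z_1^{m}z_2^{−(n+m)} − z_1^{n+m}z_2^{−m} + z_1^{−(n+m)}z_2^{n} − z_1^{−n}z_2^{n+m}. -/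
open MvPolynomial

noncomputable section

/-- The Weyl numerator for SU(3). -/
noncomputable def fc (z1 z2 : ℂ) (n m : ℤ) : ℂ :=
  z1 ^ n * z2 ^ m - z1 ^ (-m) * z2 ^ (-n) +
    z1 ^ m * z2 ^ (-(n + m)) - z1 ^ (n + m) * z2 ^ (-m) +
    z1 ^ (-(n + m)) * z2 ^ n - z1 ^ (-n) * z2 ^ (n + m)

lemma fc_zero_left (z1 z2 : ℂ) (m : ℤ) : fc z1 z2 0 m = 0 := by
  simp [fc, zpow_neg]

lemma fc_zero_right (z1 z2 : ℂ) (n : ℤ) : fc z1 z2 n 0 = 0 := by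
  simp [fc, zpow_neg]

lemma fc_swap (z1 z2 : ℂ) (n m : ℤ) : fc z2 z1 n m = fc z1 z2 m n := by
  simp only [fc, add_comm n m]; ring

lemma mono_s11 (z1 z2 : ℂ) (hz1 : z1 ≠ 0) (hz2 : z2 ≠ 0) (p q : ℤ) :
    (z1 + z2⁻¹ + z1⁻¹ * z2) * (z1 ^ p * z2 ^ q) =
      z1 ^ (p + 1) * z2 ^ q + z1 ^ p * z2 ^ (q - 1) + z1 ^ (p - 1) * z2 ^ (q + 1) := by
  rw [zpow_add_one₀ hz1, zpow_sub_one₀ hz2, zpow_sub_one₀ hz1, zpow_add_one₀ hz2]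
  field_simp

lemma fc_rec (z1 z2 : ℂ) (hz1 : z1 ≠ 0) (hz2 : z2 ≠ 0) (n m : ℤ) :
    (z1 + z2⁻¹ + z1⁻¹ * z2) * fc z1 z2 (n + 1) (m + 1) =
      fc z1 z2 (n + 1 + 1) (m + 1) + fc z1 z2 (n + 1) m + fc z1 z2 n (m + 2) := by
  simp only [fc, sub_eq_add_neg, mul_add, mul_neg, mono_s11 z1 z2 hz1 hz2]
  ring

lemma key (Q : ℤ → ℤ → Rxy) (hQ : IsQSU3 Q) :
    ∀ N : ℕ, ∀ a b : ℕ, a + b = N → ∀ z1 z2 : ℂ, z1 ≠ 0 → z2 ≠ 0 →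
      (aeval ![z1 + z2⁻¹ + z1⁻¹ * z2, z1⁻¹ + z2 + z1 * z2⁻¹] (Q (a : ℤ) (b : ℤ))) *
        fc z1 z2 1 1 = fc z1 z2 ((a : ℤ) + 1) ((b : ℤ) + 1) := by
  intro N
  induction N using Nat.strong_induction_on with
  | _ N IH =>
    have main : ∀ a b : ℕ, a + b = N → 1 ≤ a → ∀ z1 z2 : ℂ, z1 ≠ 0 → z2 ≠ 0 →
        (aeval ![z1 + z2⁻¹ + z1⁻¹ * z2, z1⁻¹ + z2 + z1 * z2⁻¹] (Q (a : ℤ) (b : ℤ))) *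
          fc z1 z2 1 1 = fc z1 z2 ((a : ℤ) + 1) ((b : ℤ) + 1) := by
      rintro a b hab ha z1 z2 hz1 hz2
      obtain ⟨a', rfl⟩ : ∃ a', a = a' + 1 := ⟨a - 1, by omega⟩
      have hx := hQ.2.2.2.1 (a' : ℤ) (b : ℤ) (by positivity) (by positivity)
      have hQab : Q ((a' : ℤ) + 1) (b : ℤ) =
          X 0 * Q (a' : ℤ) (b : ℤ) - Q (a' : ℤ) ((b : ℤ) - 1)
            - Q ((a' : ℤ) - 1) ((b : ℤ) + 1) := by
        rw [hx]; ring
      have e1 : (aeval ![z1 + z2⁻¹ + z1⁻¹ * z2, z1⁻¹ + z2 + z1 * z2⁻¹]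
            (Q (a' : ℤ) (b : ℤ))) * fc z1 z2 1 1 = fc z1 z2 ((a' : ℤ) + 1) ((b : ℤ) + 1) :=
        IH (a' + b) (by omega) a' b rfl z1 z2 hz1 hz2
      have e2 : (aeval ![z1 + z2⁻¹ + z1⁻¹ * z2, z1⁻¹ + z2 + z1 * z2⁻¹]
            (Q (a' : ℤ) ((b : ℤ) - 1))) * fc z1 z2 1 1 = fc z1 z2 ((a' : ℤ) + 1) (b : ℤ) := by
        rcases b with _ | b''
        · rw [hQ.1 (a' : ℤ) ((0 : ℕ) - 1) (by right; simp)]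
          simp [fc_zero_right]
        · have hb : ((b'' + 1 : ℕ) : ℤ) - 1 = (b'' : ℤ) := by push_cast; ring
          rw [hb]
          have := IH (a' + b'') (by omega) a' b'' rfl z1 z2 hz1 hz2
          push_cast at this ⊢
          exact this
      have e3 : (aeval ![z1 + z2⁻¹ + z1⁻¹ * z2, z1⁻¹ + z2 + z1 * z2⁻¹]
            (Q ((a' : ℤ) - 1) ((b : ℤ) + 1))) * fc z1 z2 1 1 =
          fc z1 z2 (a' : ℤ) ((b : ℤ) + 2) := by
        rcases a' with _ | a''
        · rw [hQ.1 ((0 : ℕ) - 1) ((b : ℤ) + 1) (by left; simp)]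
          simp [fc_zero_left]
        · have ha' : ((a'' + 1 : ℕ) : ℤ) - 1 = (a'' : ℤ) := by push_cast; ring
          rw [ha']
          have := IH (a'' + (b + 1)) (by omega) a'' (b + 1) rfl z1 z2 hz1 hz2
          push_cast at this ⊢
          rw [this]
          congr 1
      have hrec := fc_rec z1 z2 hz1 hz2 (a' : ℤ) (b : ℤ)
      have hc : ((a' + 1 : ℕ) : ℤ) = (a' : ℤ) + 1 := by push_cast; ring
      rw [hc, hQab]
      simp only [map_sub, map_mul, aeval_X, Matrix.cons_val_zero]
      rw [sub_mul, sub_mul, mul_assoc, e1, e2, e3]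
      linear_combination hrec
    rintro a b hab z1 z2 hz1 hz2
    rcases Nat.eq_zero_or_pos a with rfl | ha
    · rcases Nat.eq_zero_or_pos b with rfl | hb
      · simp only [Nat.cast_zero, hQ.2.1, map_one, one_mul]
        norm_num
      · -- use the symmetry
        have hswap := hQ.2.2.2.2 (b : ℤ) 0
        have h := main b 0 (by omega) hb z2 z1 hz2 hz1
        simp only [Nat.cast_zero] at h ⊢
        rw [← hswap, aeval_rename]
        have hvec : (![z1 + z2⁻¹ + z1⁻¹ * z2, z1⁻¹ + z2 + z1 * z2⁻¹] ∘
            (Equiv.swap (0 : Fin 2) 1)) = ![z2 + z1⁻¹ + z2⁻¹ * z1, z2⁻¹ + z1 + z2 * z1⁻¹] := by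
          funext i
          fin_cases i <;> simp [Equiv.swap_apply_left, Equiv.swap_apply_right] <;> ring
        rw [hvec, fc_swap z2 z1 1 1, ← fc_swap z1 z2]
        exact h
    · exact main a b hab ha z1 z2 hz1 hz2

theorem stmt_11 (Q : ℤ → ℤ → Rxy) (hQ : IsQSU3 Q)
    (n m : ℕ) (hn : 1 ≤ n) (hm : 1 ≤ m)
    (z1 z2 : ℂ) (hz1 : z1 ≠ 0) (hz2 : z2 ≠ 0) :
    (aeval ![z1 + z2⁻¹ + z1⁻¹ * z2, z1⁻¹ + z2 + z1 * z2⁻¹]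
        (Q ((n : ℤ) - 1) ((m : ℤ) - 1))) *
      (z1 * z2 - z1⁻¹ * z2⁻¹ + z1 * z2 ^ (-2 : ℤ) - z1 ^ (2 : ℤ) * z2⁻¹ +
        z1 ^ (-2 : ℤ) * z2 - z1⁻¹ * z2 ^ (2 : ℤ)) =
    z1 ^ (n : ℤ) * z2 ^ (m : ℤ) - z1 ^ (-(m : ℤ)) * z2 ^ (-(n : ℤ)) +
      z1 ^ (m : ℤ) * z2 ^ (-((n : ℤ) + (m : ℤ))) - z1 ^ ((n : ℤ) + (m : ℤ)) * z2 ^ (-(m : ℤ)) +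
      z1 ^ (-((n : ℤ) + (m : ℤ))) * z2 ^ (n : ℤ) - z1 ^ (-(n : ℤ)) * z2 ^ ((n : ℤ) + (m : ℤ)) := by
  have hD : (z1 * z2 - z1⁻¹ * z2⁻¹ + z1 * z2 ^ (-2 : ℤ) - z1 ^ (2 : ℤ) * z2⁻¹ +
      z1 ^ (-2 : ℤ) * z2 - z1⁻¹ * z2 ^ (2 : ℤ)) = fc z1 z2 1 1 := by
    norm_num [fc]
  have h := key Q hQ ((n - 1) + (m - 1)) (n - 1) (m - 1) rfl z1 z2 hz1 hz2
  have hn' : ((n - 1 : ℕ) : ℤ) = (n : ℤ) - 1 := by omega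
  have hm' : ((m - 1 : ℕ) : ℤ) = (m : ℤ) - 1 := by omega
  rw [hn', hm'] at h
  rw [hD, h]
  have h1 : (n : ℤ) - 1 + 1 = (n : ℤ) := by ring
  have h2 : (m : ℤ) - 1 + 1 = (m : ℤ) := by ring
  rw [h1, h2]
  rfl

end
end
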